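/- Under the assumptions of the previous statement (R_y = A_I R A_I* with R positive definite and A_I of full column rank p, and q ≥ p+1), let U_n ∈ ℂ^{q×(q−p)} be a matrix whose columns form an orthonormal basis of the orthogonal complement of range(R_y). Then for every index ℓ ∈ I, U_n* a_ℓ = 0, where a_ℓ is the ℓ-th column of A; and if additionally spark(A) ≥ p+1, then for every ℓ ∉ I with a_ℓ in general position (specifically, a_ℓ ∉ range(A_I)), U_n* a_ℓ ≠ 0. Hence I = { ℓ : U_n* a_ℓ = 0 } provided no column outside I lies in range(A_I). -/

import Mathlib

open scoped Classical ComplexOrder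

/-!
Since `R` is positive definite, `ker R_y = ker A_Iᴴ`, and as `R_y` is Hermitian its range is
`(ker R_y)ᗮ = (ker A_Iᴴ)ᗮ = range A_I`. On the other hand `U_nᴴ a = 0` says exactly that `a` is
orthogonal to `range U_n = ker R_y`. So `U_nᴴ a = 0 ↔ a ∈ range A_I`, which gives all three claims.
-/

namespace Matrix

variable {m n 𝕜 : Type*} [Fintype m] [Fintype n] [RCLike 𝕜]

theorem mem_range_mulVecLin_conjTranspose_iff (M : Matrix m n 𝕜) (a : n → 𝕜) :
    a ∈ LinearMap.range Mᴴ.mulVecLin ↔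
      ∀ v ∈ LinearMap.ker M.mulVecLin, star v ⬝ᵥ a = 0 := by
  have hrange : a ∈ LinearMap.range Mᴴ.mulVecLin ↔
      WithLp.toLp 2 a ∈ LinearMap.range (toEuclideanLin M).adjoint := by
    rw [← toEuclideanLin_conjTranspose_eq_adjoint]
    constructor
    · rintro ⟨c, rfl⟩; exact ⟨WithLp.toLp 2 c, rfl⟩
    · rintro ⟨c, hc⟩; exact ⟨c.ofLp, congrArg WithLp.ofLp hc⟩
  rw [hrange, ← LinearMap.orthogonal_ker, Submodule.mem_orthogonal]
  constructor
  · intro h v hv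
    rw [dotProduct_comm]
    exact h (WithLp.toLp 2 v) (congrArg (WithLp.toLp 2) hv)
  · intro h u hu
    rw [EuclideanSpace.inner_eq_star_dotProduct, dotProduct_comm]
    exact h u.ofLp (congrArg WithLp.ofLp hu)

theorem conjTranspose_mulVec_eq_zero_iff (M : Matrix m n 𝕜) (a : m → 𝕜) :
    Mᴴ *ᵥ a = 0 ↔ ∀ v ∈ LinearMap.range M.mulVecLin, star v ⬝ᵥ a = 0 := by
  have hpair : ∀ d, star (M *ᵥ d) ⬝ᵥ a = star d ⬝ᵥ (Mᴴ *ᵥ a) := fun d => by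
    rw [star_mulVec, dotProduct_mulVec]
  constructor
  · rintro h _ ⟨d, rfl⟩
    rw [mulVecLin_apply, hpair, h, dotProduct_zero]
  · intro h
    rw [← dotProduct_star_self_eq_zero, ← hpair]
    exact h _ ⟨_, rfl⟩

theorem PosDef.ker_mulVecLin_mul_mul_conjTranspose {k : Type*} [Fintype k] {R : Matrix k k 𝕜}
    (hR : R.PosDef) (B : Matrix m k 𝕜) :
    LinearMap.ker (B * R * Bᴴ).mulVecLin = LinearMap.ker Bᴴ.mulVecLin := by
  ext x
  simp only [LinearMap.mem_ker, mulVecLin_apply]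
  constructor
  · intro hx
    by_contra hne
    have hquad : star (Bᴴ *ᵥ x) ⬝ᵥ (R *ᵥ (Bᴴ *ᵥ x)) = star x ⬝ᵥ ((B * R * Bᴴ) *ᵥ x) := by
      rw [star_mulVec, conjTranspose_conjTranspose, ← dotProduct_mulVec, mulVec_mulVec,
        mulVec_mulVec]
    exact (hR.dotProduct_mulVec_pos hne).ne' (by rw [hquad, hx, dotProduct_zero])
  · intro hx
    rw [← mulVec_mulVec, hx, mulVec_zero]

theorem PosDef.range_mulVecLin_mul_mul_conjTranspose {k : Type*} [Fintype k] {R : Matrix k k 𝕜}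
    (hR : R.PosDef) (B : Matrix m k 𝕜) :
    LinearMap.range (B * R * Bᴴ).mulVecLin = LinearMap.range B.mulVecLin := by
  have hherm : (B * R * Bᴴ)ᴴ = B * R * Bᴴ := by
    rw [conjTranspose_mul, conjTranspose_mul, conjTranspose_conjTranspose, hR.1.eq,
      Matrix.mul_assoc]
  ext a
  conv_lhs => rw [← hherm]
  conv_rhs => rw [← conjTranspose_conjTranspose B]
  rw [mem_range_mulVecLin_conjTranspose_iff, mem_range_mulVecLin_conjTranspose_iff,
    hR.ker_mulVecLin_mul_mul_conjTranspose]

end Matrix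

theorem stmt6_general {q L p : ℕ}
    (A : Matrix (Fin q) (Fin L) ℂ)
    (I : Finset (Fin L))
    (AI : Matrix (Fin q) {j // j ∈ I} ℂ) (hAI : AI = A.submatrix id Subtype.val)
    (R : Matrix {j // j ∈ I} {j // j ∈ I} ℂ) (hR : R.PosDef)
    (Ry : Matrix (Fin q) (Fin q) ℂ)
    (hRy : Ry = AI * R * AI.conjTranspose)
    (Un : Matrix (Fin q) (Fin (q - p)) ℂ)
    (hUnSpan : LinearMap.range Un.mulVecLin = LinearMap.ker Ry.mulVecLin) :
    (∀ ℓ : Fin L, ℓ ∈ I → Un.conjTranspose.mulVec (A.transpose ℓ) = 0) ∧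
    (∀ ℓ : Fin L, ℓ ∉ I → A.transpose ℓ ∉ LinearMap.range AI.mulVecLin →
      Un.conjTranspose.mulVec (A.transpose ℓ) ≠ 0) ∧
    ((∀ ℓ : Fin L, ℓ ∉ I → A.transpose ℓ ∉ LinearMap.range AI.mulVecLin) →
      I = Finset.univ.filter
        (fun ℓ => Un.conjTranspose.mulVec (A.transpose ℓ) = 0)) := by
  have hRyHerm : Ry.IsHermitian := hRy ▸ Matrix.isHermitian_mul_mul_conjTranspose AI hR.1
  have hnull : ∀ a, Un.conjTranspose.mulVec a = 0 ↔ a ∈ LinearMap.range AI.mulVecLin := fun a => by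
    rw [Matrix.conjTranspose_mulVec_eq_zero_iff, hUnSpan,
      ← Matrix.mem_range_mulVecLin_conjTranspose_iff,
      hRyHerm.eq, hRy, hR.range_mulVecLin_mul_mul_conjTranspose]
  have hcol : ∀ ℓ ∈ I, A.transpose ℓ ∈ LinearMap.range AI.mulVecLin := fun ℓ hℓ =>
    ⟨Pi.single ⟨ℓ, hℓ⟩ 1, by rw [Matrix.mulVecLin_apply, Matrix.mulVec_single_one, hAI]; rfl⟩
  refine ⟨fun ℓ hℓ => (hnull _).2 (hcol ℓ hℓ), fun ℓ _ hℓ => mt (hnull _).1 hℓ, fun hgen => ?_⟩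
  ext ℓ
  rw [Finset.mem_filter, hnull]
  exact ⟨fun hℓ => ⟨Finset.mem_univ ℓ, hcol ℓ hℓ⟩,
    fun ⟨_, hmem⟩ => by_contra fun hℓ => hgen ℓ hℓ hmem⟩

/-- correctness of MUSIC support recovery.  With
`R_y = A_I R A_I*` (`R` positive definite, `A_I` full column rank `p`,
`q ≥ p+1`), and `U_n` having orthonormal columns spanning the kernel of `R_y`
(the orthogonal complement of `range R_y`): every column `a_ℓ` of `A` with
`ℓ ∈ I` satisfies `U_n* a_ℓ = 0`; every column with `ℓ ∉ I` and
`a_ℓ ∉ range A_I` satisfies `U_n* a_ℓ ≠ 0`; hence `I = {ℓ : U_n* a_ℓ = 0}`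
provided no column outside `I` lies in `range A_I`. -/
theorem stmt6 {q L p : ℕ} (hq : p + 1 ≤ q)
    (A : Matrix (Fin q) (Fin L) ℂ)
    (I : Finset (Fin L)) (hI : I.card = p)
    (AI : Matrix (Fin q) {j // j ∈ I} ℂ) (hAI : AI = A.submatrix id Subtype.val)
    (hrank : AI.rank = p)
    (hspark : ∀ s : Finset (Fin L), s.card = p →
      LinearIndependent ℂ (fun j : s => A.transpose j.1))
    (R : Matrix {j // j ∈ I} {j // j ∈ I} ℂ) (hR : R.PosDef)
    (Ry : Matrix (Fin q) (Fin q) ℂ)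
    (hRy : Ry = AI * R * AI.conjTranspose)
    (Un : Matrix (Fin q) (Fin (q - p)) ℂ)
    (hUnOrtho : Un.conjTranspose * Un = 1)
    (hUnSpan : LinearMap.range Un.mulVecLin = LinearMap.ker Ry.mulVecLin) :
    (∀ ℓ : Fin L, ℓ ∈ I → Un.conjTranspose.mulVec (A.transpose ℓ) = 0) ∧
    (∀ ℓ : Fin L, ℓ ∉ I → A.transpose ℓ ∉ LinearMap.range AI.mulVecLin →
      Un.conjTranspose.mulVec (A.transpose ℓ) ≠ 0) ∧
    ((∀ ℓ : Fin L, ℓ ∉ I → A.transpose ℓ ∉ LinearMap.range AI.mulVecLin) →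
      I = Finset.univ.filter
        (fun ℓ => Un.conjTranspose.mulVec (A.transpose ℓ) = 0)) :=
  stmt6_general A I AI hAI R hR Ry hRy Un hUnSpan
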